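/- arXiv:2201.12748 — 2 statements merged into one kernel-verified Lean document; each statement's English description precedes it below -/
import Mathlib

section
/- Let Ω ⊆ ℝⁿ be a bounded connected open set and A : closure(Ω) → ℂ^(m×m) continuous, with induced multiplication operator M_A on C(closure(Ω))^m. Then λ ∈ ℂ is an eigenvalue of M_A if and only if the compact set Γ_λ = {x ∈ closure(Ω) : det(λI − A(x)) = 0} has nonempty interior. -/
/-!
If `A f = λ f` with `f x₀ ≠ 0`, then `λ • 1 - A` is singular on the open set where `f ≠ 0`, and
this set meets the open set `Ω`, so it contains a nonempty open subset of `Γ_λ`.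

Conversely, let `D` be the open set of points of `closure Ω` interior to `Γ_λ`, let `k + 1` be
the least size for which all `(k + 1)`-minors of `B = λ • 1 - A` vanish on `D`, and pick a nonzero
`k`-minor of `B x₀` with `x₀ ∈ D`. Adjoin one more column to it: expanding the vanishing
`(k + 1)`-minors along an extra row shows that the cofactors of that row, extended by zero, form
a kernel vector of `B y` for every `y ∈ D`. It depends continuously on `y` and one of its entries
at `x₀` is the chosen minor. A continuous cut-off that is nonzero at `x₀` and vanishes off `D`
turns it into a global eigenfunction.
-/

open Matrix Function

namespace Matrix

variable {ι κ R : Type*} [CommRing R] {k : ℕ}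

/-- The cofactors along the last row of any `(k + 1) × (k + 1)` matrix whose first `k` rows are
the rows `ρ` of `M`. -/
def cofactorVec (M : Matrix ι (Fin (k + 1)) R) (ρ : Fin k → ι) : Fin (k + 1) → R :=
  fun j => (-1) ^ (k + j : ℕ) * (M.submatrix ρ j.succAbove).det

theorem mulVec_cofactorVec_apply (M : Matrix ι (Fin (k + 1)) R) (ρ : Fin k → ι) (r : ι) :
    (M *ᵥ cofactorVec M ρ) r = (M.submatrix (Fin.snoc ρ r) id).det := by
  rw [det_succ_row _ (Fin.last k), mulVec, dotProduct]
  refine Finset.sum_congr rfl fun j _ => ?_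
  simp only [cofactorVec, submatrix_submatrix, Fin.succAbove_last, Fin.snoc_comp_castSucc,
    submatrix_apply, Fin.snoc_last, Fin.val_last, id, Function.id_comp]
  ring

theorem cofactorVec_last (M : Matrix ι (Fin (k + 1)) R) (ρ : Fin k → ι) :
    cofactorVec M ρ (Fin.last k) = (M.submatrix ρ Fin.castSucc).det := by
  simp [cofactorVec, Fin.succAbove_last, Even.neg_one_pow ⟨k, rfl⟩]

theorem mulVec_extend_zero [Fintype κ] {l : Type*} [Fintype l] (M : Matrix ι κ R) {γ : l → κ}
    (hγ : Injective γ) (w : l → R) :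
    M *ᵥ extend γ w 0 = M.submatrix id γ *ᵥ w := by
  ext r
  refine (Fintype.sum_of_injective γ hγ _ _ (fun c hc => ?_) fun j => ?_).symm
  · rw [extend_apply' _ _ _ fun ⟨j, hj⟩ => hc ⟨j, hj⟩, Pi.zero_apply, mul_zero]
  · rw [hγ.extend_apply]
    rfl

theorem det_submatrix_eq_zero_of_det_eq_zero [Fintype ι] [DecidableEq ι] [Fintype κ] [DecidableEq κ]
    {M : Matrix ι ι R} (hM : M.det = 0) (e : κ ≃ ι) (ρ γ : κ → ι) :
    (M.submatrix ρ γ).det = 0 := by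
  have hfactor : M.submatrix ρ γ =
      (1 : Matrix κ κ R).submatrix (e.symm ∘ ρ) id * M.submatrix e e *
        (1 : Matrix κ κ R).submatrix id (e.symm ∘ γ) := by
    ext i j
    simp [mul_apply, one_apply]
  rw [hfactor, det_mul, det_mul, det_submatrix_equiv_self, hM, mul_zero, zero_mul]

theorem continuous_cofactorVec [TopologicalSpace R] [IsTopologicalRing R] (ρ : Fin k → ι) :
    Continuous fun M : Matrix ι (Fin (k + 1)) R => cofactorVec M ρ :=
  continuous_pi fun _ => continuous_const.mul (continuous_id.matrix_submatrix _ _).matrix_det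

end Matrix

theorem continuous_extend_zero {ι κ M : Type*} [TopologicalSpace M] [Zero M] {γ : ι → κ}
    (hγ : Injective γ) : Continuous fun w : ι → M => extend γ w 0 := by
  refine continuous_pi fun c => ?_
  by_cases hc : ∃ i, γ i = c
  · obtain ⟨j, rfl⟩ := hc
    simpa only [hγ.extend_apply] using continuous_apply j
  · simpa only [extend_apply' _ _ _ hc] using continuous_const

section ContinuousKernel

variable {X ι κ R : Type*} [TopologicalSpace X] [CommRing R] [TopologicalSpace R]

theorem exists_continuous_mulVec_eq_zero_of_det_submatrix_snoc_eq_zero [IsTopologicalRing R]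
    [Fintype κ] {B : X → Matrix ι κ R} (hB : Continuous B) {D : Set X} {k : ℕ} (ρ : Fin k → ι)
    (γ : Fin (k + 1) ↪ κ) (hD : ∀ y ∈ D, ∀ r, ((B y).submatrix (Fin.snoc ρ r) γ).det = 0) :
    ∃ v : X → κ → R, Continuous v ∧ (∀ y ∈ D, B y *ᵥ v y = 0) ∧
      ∀ x, v x (γ (Fin.last k)) = ((B x).submatrix ρ (γ ∘ Fin.castSucc)).det := by
  refine ⟨fun x => extend γ (cofactorVec ((B x).submatrix id γ) ρ) 0,
    (continuous_extend_zero γ.injective).comp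
      ((continuous_cofactorVec ρ).comp (hB.matrix_submatrix _ _)), fun y hy => ?_, fun x => ?_⟩
  · ext r
    rw [mulVec_extend_zero _ γ.injective, mulVec_cofactorVec_apply]
    exact hD y hy r
  · dsimp only
    rw [γ.injective.extend_apply, cofactorVec_last]
    rfl

theorem exists_continuous_mulVec_eq_zero_of_det_eq_zero [IsTopologicalRing R] [Fintype ι]
    [DecidableEq ι] [Nontrivial R]
    {B : X → Matrix ι ι R} (hB : Continuous B) {D : Set X} (hDne : D.Nonempty)
    (hD : ∀ y ∈ D, (B y).det = 0) :
    ∃ x₀ ∈ D, ∃ v : X → ι → R, Continuous v ∧ v x₀ ≠ 0 ∧ ∀ y ∈ D, B y *ᵥ v y = 0 := by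
  classical
  let Q : ℕ → Prop := fun j =>
    ∀ y ∈ D, ∀ (ρ : Fin j → ι) (γ : Fin j ↪ ι), ((B y).submatrix ρ γ).det = 0
  have hQcard : Q (Fintype.card ι) := fun y hy ρ γ =>
    det_submatrix_eq_zero_of_det_eq_zero (hD y hy) (Fintype.equivFin ι).symm ρ γ
  have hQzero : ¬Q 0 := fun h => by
    obtain ⟨y, hy⟩ := hDne
    simpa using h y hy finZeroElim Function.Embedding.ofIsEmpty
  obtain ⟨k, hk⟩ : ∃ k, Nat.find ⟨_, hQcard⟩ = k + 1 :=
    Nat.exists_eq_succ_of_ne_zero fun h => hQzero (h ▸ Nat.find_spec ⟨_, hQcard⟩)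
  have hQsucc : Q (k + 1) := hk ▸ Nat.find_spec ⟨_, hQcard⟩
  have hkcard : k + 1 ≤ Fintype.card ι := hk ▸ Nat.find_min' _ hQcard
  have hQk : ¬Q k := Nat.find_min ⟨_, hQcard⟩ (by omega)
  simp only [Q, not_forall] at hQk
  obtain ⟨x₀, hx₀, ρ, γ, hdet⟩ := hQk
  obtain ⟨c₀, hc₀⟩ : ∃ c₀, c₀ ∉ Set.range γ := by
    by_contra! hγ
    have := Fintype.card_le_of_surjective γ fun c => hγ c
    rw [Fintype.card_fin] at this
    omega
  obtain ⟨v, hv, hBv, hvlast⟩ := exists_continuous_mulVec_eq_zero_of_det_submatrix_snoc_eq_zero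
    hB ρ (Fin.Embedding.snoc γ hc₀) fun y hy r => hQsucc y hy _ _
  refine ⟨x₀, hx₀, v, hv, fun hv₀ => hdet ?_, hBv⟩
  have hsnoc : ⇑(Fin.Embedding.snoc γ hc₀) ∘ Fin.castSucc = γ := by
    ext i
    simp
  simpa [hv₀, hsnoc] using (hvlast x₀).symm

theorem exists_continuousMap_mulVec_eq_zero [Fintype κ] [CompletelyRegularSpace X] [Algebra ℝ R]
    [ContinuousSMul ℝ R] {B : X → Matrix ι κ R} {D : Set X} (hD : IsOpen D) {v : X → κ → R}
    (hv : Continuous v) {x₀ : X} (hx₀ : x₀ ∈ D) (hvx₀ : v x₀ ≠ 0)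
    (hBv : ∀ y ∈ D, B y *ᵥ v y = 0) :
    ∃ f : C(X, κ → R), f ≠ 0 ∧ ∀ y, B y *ᵥ f y = 0 := by
  obtain ⟨φ, hφ, hφx₀, hφD⟩ :=
    CompletelyRegularSpace.completely_regular x₀ Dᶜ hD.isClosed_compl (not_not.2 hx₀)
  refine ⟨⟨fun y => (1 - (φ y : ℝ)) • v y,
    (continuous_const.sub (continuous_subtype_val.comp hφ)).smul hv⟩, fun h => hvx₀ ?_,
    fun y => ?_⟩
  · simpa [hφx₀] using DFunLike.congr_fun h x₀
  · by_cases hy : y ∈ D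
    · simp [mulVec_smul, hBv y hy]
    · simp [hφD hy]

end ContinuousKernel

theorem IsOpen.exists_isOpen_subset_of_isOpen_closure {X : Type*} [TopologicalSpace X]
    {Ω : Set X} (hΩ : IsOpen Ω) {S : Set (closure Ω)} (hS : IsOpen S) (hSne : S.Nonempty) :
    ∃ U, IsOpen U ∧ U.Nonempty ∧ U ⊆ Ω ∧ Subtype.val ⁻¹' U ⊆ S := by
  obtain ⟨W, hW, rfl⟩ := isOpen_induced_iff.mp hS
  obtain ⟨⟨y, hyΩ⟩, hyW⟩ := hSne
  exact ⟨W ∩ Ω, hW.inter hΩ, mem_closure_iff.1 hyΩ W hW hyW, Set.inter_subset_right,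
    fun _ hx => hx.1⟩

theorem stmt1_general {n m : ℕ} (Ω : Set (EuclideanSpace ℝ (Fin n)))
    (hΩo : IsOpen Ω)
    (A : C(↥(closure Ω), Matrix (Fin m) (Fin m) ℂ)) (lam : ℂ) :
    (∃ f : C(↥(closure Ω), Fin m → ℂ), f ≠ 0 ∧
        ∀ x : ↥(closure Ω), (A x).mulVec (f x) = lam • f x) ↔
      (interior {x : EuclideanSpace ℝ (Fin n) |
        ∃ hx : x ∈ closure Ω,
          (lam • (1 : Matrix (Fin m) (Fin m) ℂ) - A ⟨x, hx⟩).det = 0}).Nonempty := by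
  set B : closure Ω → Matrix (Fin m) (Fin m) ℂ := fun x => lam • 1 - A x
  have hB : ∀ x v, A x *ᵥ v = lam • v ↔ B x *ᵥ v = 0 := fun x v => by
    rw [sub_mulVec, smul_mulVec, one_mulVec, sub_eq_zero, eq_comm]
  constructor
  · rintro ⟨f, hf, heig⟩
    obtain ⟨x₀, hx₀⟩ : ∃ x, f x ≠ 0 := DFunLike.ne_iff.1 hf
    obtain ⟨U, hUo, hUne, hUΩ, hUf⟩ := hΩo.exists_isOpen_subset_of_isOpen_closure
      (isOpen_ne_fun f.continuous continuous_const) ⟨x₀, hx₀⟩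
    refine hUne.mono (interior_maximal (fun x hx => ⟨subset_closure (hUΩ hx), ?_⟩) hUo)
    exact exists_mulVec_eq_zero_iff.1 ⟨_, hUf hx, (hB _ _).1 (heig _)⟩
  · rintro ⟨x₁, hx₁⟩
    obtain ⟨x₀, hx₀, v, hv, hvx₀, hBv⟩ := exists_continuous_mulVec_eq_zero_of_det_eq_zero
      (continuous_const.sub A.continuous) (D := Subtype.val ⁻¹' interior _)
      ⟨⟨x₁, (interior_subset hx₁).1⟩, hx₁⟩ fun y hy => (interior_subset hy).2
    obtain ⟨f, hf, hBf⟩ := exists_continuousMap_mulVec_eq_zero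
      (isOpen_interior.preimage continuous_subtype_val) hv hx₀ hvx₀ hBv
    exact ⟨f, hf, fun x => (hB x _).2 (hBf x)⟩

/-- `λ` is an eigenvalue of the multiplication operator `M_A` on `C(closure Ω)^m`
iff the compact set `Γ_λ = {x ∈ closure Ω : det(λI − A(x)) = 0}` has nonempty interior. -/
theorem stmt1 {n m : ℕ} (Ω : Set (EuclideanSpace ℝ (Fin n)))
    (hΩo : IsOpen Ω) (hΩc : IsConnected Ω) (hΩb : Bornology.IsBounded Ω)
    (A : C(↥(closure Ω), Matrix (Fin m) (Fin m) ℂ)) (lam : ℂ) :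
    (∃ f : C(↥(closure Ω), Fin m → ℂ), f ≠ 0 ∧
        ∀ x : ↥(closure Ω), (A x).mulVec (f x) = lam • f x) ↔
      (interior {x : EuclideanSpace ℝ (Fin n) |
        ∃ hx : x ∈ closure Ω,
          (lam • (1 : Matrix (Fin m) (Fin m) ℂ) - A ⟨x, hx⟩).det = 0}).Nonempty :=
  stmt1_general Ω hΩo A lam
end

section
/- Fix k > 0 and 0 < m₁ < m₂, and for 0 ≤ v < v_r := m₁/(2√k) − 1 (assuming m₁ > 2√k) let u_+(v) = (m₁ + √(m₁² − 4k(1+v)²))/(2k(1+v)). Then u_+ is differentiable with d/dv u_+(v) = −u_+(v)/(1+v) − 2/√(m₁² − 4k(1+v)²) ≤ −u_+(v)/(1+v), and for g(u,v) = −μv − uv + m₂ u²/(1+ku²) with μ > 0 one has, using the nullcline identity m₁ u_+(v) = (1+v)(1+k u_+(v)²), the estimate d/dv [g(u_+(v), v)] ≤ −μ − u_+(v)/(1+v) < 0. -/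
/-!
`u_+(w)` is the larger root of `k (1 + w) u² - m₁ u + (1 + w) = 0`, so along it the Hill term
`m₂ u² / (1 + k u²)` equals `(m₂ / m₁) u (1 + w)`, and near `v` the map `w ↦ g(u_+(w), w)` is
`-μ w + u_+(w) ((m₂ / m₁ - 1) w + m₂ / m₁)`. Its derivative is bounded using
`u_+' ≤ -u_+ / (1 + w)` and the positivity of the coefficient `(m₂ / m₁ - 1) w + m₂ / m₁`.
-/

open Filter Topology

/-- The upper root `u_+(w)` of the `u`-nullcline `m₁ u = (1 + w)(1 + k u²)`. -/
noncomputable def upperBranch (k m₁ w : ℝ) : ℝ :=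
  (m₁ + Real.sqrt (m₁ ^ 2 - 4 * k * (1 + w) ^ 2)) / (2 * k * (1 + w))

section UpperBranch

variable {k m₁ w : ℝ}

lemma pos_and_disc_pos_of_lt_div (hk : 0 < k) (hw : 0 < 1 + w)
    (h : 1 + w < m₁ / (2 * Real.sqrt k)) : 0 < m₁ ∧ 0 < m₁ ^ 2 - 4 * k * (1 + w) ^ 2 := by
  have hlt : 2 * Real.sqrt k * (1 + w) < m₁ := by
    rwa [lt_div_iff₀ (by positivity), mul_comm] at h
  have hsq : (2 * Real.sqrt k * (1 + w)) ^ 2 < m₁ ^ 2 := by gcongr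
  rw [mul_pow, mul_pow, Real.sq_sqrt hk.le] at hsq
  exact ⟨lt_trans (by positivity) hlt, by linarith⟩

lemma upperBranch_pos (hk : 0 < k) (hm₁ : 0 < m₁) (hw : 0 < 1 + w) :
    0 < upperBranch k m₁ w := by
  unfold upperBranch
  positivity

lemma upperBranch_nullcline (hk : k ≠ 0) (hw : 1 + w ≠ 0)
    (hdisc : 0 ≤ m₁ ^ 2 - 4 * k * (1 + w) ^ 2) :
    (1 + w) * (1 + k * upperBranch k m₁ w ^ 2) = m₁ * upperBranch k m₁ w := by
  have hs := Real.sq_sqrt hdisc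
  unfold upperBranch
  generalize Real.sqrt (m₁ ^ 2 - 4 * k * (1 + w) ^ 2) = s at hs ⊢
  field_simp
  linear_combination hs

lemma hasDerivAt_upperBranch (hk : k ≠ 0) (hw : 1 + w ≠ 0)
    (hdisc : 0 < m₁ ^ 2 - 4 * k * (1 + w) ^ 2) :
    HasDerivAt (upperBranch k m₁)
      (-upperBranch k m₁ w / (1 + w) - 2 / Real.sqrt (m₁ ^ 2 - 4 * k * (1 + w) ^ 2)) w := by
  have hone : HasDerivAt (fun x : ℝ => 1 + x) 1 w := (hasDerivAt_id w).const_add 1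
  have hnum :=
    ((((hone.fun_pow 2).const_mul (4 * k)).const_sub (m₁ ^ 2)).sqrt hdisc.ne').const_add m₁
  refine (hnum.div (hone.const_mul (2 * k)) (by simp [hk, hw])).congr_deriv ?_
  unfold upperBranch
  field_simp
  norm_num
  ring

end UpperBranch

lemma hill_eq_of_nullcline {k m₁ m₂ u w : ℝ} (hk : 0 ≤ k) (hm₁ : m₁ ≠ 0)
    (h : (1 + w) * (1 + k * u ^ 2) = m₁ * u) :
    m₂ * u ^ 2 / (1 + k * u ^ 2) = m₂ / m₁ * u * (1 + w) := by
  rw [div_mul_eq_mul_div, div_mul_eq_mul_div, div_eq_div_iff (by positivity) hm₁]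
  linear_combination -(m₂ * u) * h

lemma g_upperBranch_eventuallyEq {k m₁ m₂ μ v : ℝ} (hk : 0 < k) (hm₁ : m₁ ≠ 0)
    (hv : 0 < 1 + v) (hdisc : 0 < m₁ ^ 2 - 4 * k * (1 + v) ^ 2) :
    (fun w => -μ * w - upperBranch k m₁ w * w
        + m₂ * upperBranch k m₁ w ^ 2 / (1 + k * upperBranch k m₁ w ^ 2))
      =ᶠ[𝓝 v] fun w => -μ * w + upperBranch k m₁ w * ((m₂ / m₁ - 1) * w + m₂ / m₁) := by
  have hv' : ∀ᶠ w in 𝓝 v, 0 < 1 + w :=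
    (continuous_const.add continuous_id).continuousAt.eventually (eventually_gt_nhds hv)
  have hdisc' : ∀ᶠ w in 𝓝 v, 0 < m₁ ^ 2 - 4 * k * (1 + w) ^ 2 :=
    (by fun_prop : Continuous fun w : ℝ => m₁ ^ 2 - 4 * k * (1 + w) ^ 2).continuousAt.eventually
      (eventually_gt_nhds hdisc)
  filter_upwards [hv', hdisc'] with w hw hdw
  rw [hill_eq_of_nullcline hk.le hm₁ (upperBranch_nullcline hk.ne' hw.ne' hdw.le)]
  ring

theorem stmt12_general (k m₁ m₂ μ v : ℝ) (up : ℝ → ℝ)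
    (hk : 0 < k) (hm2 : m₁ < m₂) (hμ : 0 < μ)
    (hv0 : 0 ≤ v) (hv : v < m₁ / (2 * Real.sqrt k) - 1)
    (hup : ∀ w : ℝ, up w =
      (m₁ + Real.sqrt (m₁ ^ 2 - 4 * k * (1 + w) ^ 2)) / (2 * k * (1 + w))) :
    HasDerivAt up
      (-(up v) / (1 + v) - 2 / Real.sqrt (m₁ ^ 2 - 4 * k * (1 + v) ^ 2)) v ∧
    (-(up v) / (1 + v) - 2 / Real.sqrt (m₁ ^ 2 - 4 * k * (1 + v) ^ 2)
      ≤ -(up v) / (1 + v)) ∧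
    ∃ d : ℝ,
      HasDerivAt (fun w => -μ * w - up w * w + m₂ * (up w) ^ 2 / (1 + k * (up w) ^ 2)) d v ∧
      d ≤ -μ - up v / (1 + v) ∧ d < 0 := by
  obtain rfl : up = upperBranch k m₁ := funext hup
  have h1v : 0 < 1 + v := by linarith
  obtain ⟨hm₁, hdisc⟩ := pos_and_disc_pos_of_lt_div hk h1v (lt_sub_iff_add_lt'.mp hv)
  have hu := upperBranch_pos hk hm₁ h1v
  set u := upperBranch k m₁ v
  set u' := -u / (1 + v) - 2 / Real.sqrt (m₁ ^ 2 - 4 * k * (1 + v) ^ 2)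
  have hu' := hasDerivAt_upperBranch hk.ne' h1v.ne' hdisc
  have hu'le : u' ≤ -u / (1 + v) := sub_le_self _ (by positivity)
  set r := m₂ / m₁
  have hr : 1 < r := (one_lt_div hm₁).mpr hm2
  have hg := (((hasDerivAt_id v).const_mul (-μ)).add
    (hu'.mul (((hasDerivAt_id v).const_mul (r - 1)).add_const r))).congr_of_eventuallyEq
    (g_upperBranch_eventuallyEq (m₂ := m₂) (μ := μ) hk hm₁.ne' h1v hdisc)
  have hc : 0 ≤ (r - 1) * v + r := by nlinarith
  have hle : -μ * 1 + (u' * ((r - 1) * v + r) + u * ((r - 1) * 1)) ≤ -μ - u / (1 + v) :=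
    calc _ ≤ -μ * 1 + (-u / (1 + v) * ((r - 1) * v + r) + u * ((r - 1) * 1)) := by gcongr
      _ = -μ - u / (1 + v) := by field_simp; ring
  exact ⟨hu', hu'le, _, hg, hle, hle.trans_lt (by linarith [div_pos hu h1v])⟩

/-- Derivative computations for the upper nullcline branch `u_+` of the DDI-hysteresis
model: `u_+' (v) = −u_+(v)/(1+v) − 2/√(m₁²−4k(1+v)²) ≤ −u_+(v)/(1+v)`, and the
derivative of `v ↦ g(u_+(v), v)` is at most `−μ − u_+(v)/(1+v) < 0`. -/
theorem stmt12 (k m₁ m₂ μ v : ℝ) (up : ℝ → ℝ)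
    (hk : 0 < k) (hm1 : 2 * Real.sqrt k < m₁) (hm2 : m₁ < m₂) (hμ : 0 < μ)
    (hv0 : 0 ≤ v) (hv : v < m₁ / (2 * Real.sqrt k) - 1)
    (hup : ∀ w : ℝ, up w =
      (m₁ + Real.sqrt (m₁ ^ 2 - 4 * k * (1 + w) ^ 2)) / (2 * k * (1 + w))) :
    HasDerivAt up
      (-(up v) / (1 + v) - 2 / Real.sqrt (m₁ ^ 2 - 4 * k * (1 + v) ^ 2)) v ∧
    (-(up v) / (1 + v) - 2 / Real.sqrt (m₁ ^ 2 - 4 * k * (1 + v) ^ 2)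
      ≤ -(up v) / (1 + v)) ∧
    ∃ d : ℝ,
      HasDerivAt (fun w => -μ * w - up w * w + m₂ * (up w) ^ 2 / (1 + k * (up w) ^ 2)) d v ∧
      d ≤ -μ - up v / (1 + v) ∧ d < 0 :=
  stmt12_general k m₁ m₂ μ v up hk hm2 hμ hv0 hv hup
end
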